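/- arXiv:2101.07550 — 2 statements merged into one kernel-verified Lean document; each statement's English description precedes it below -/
import Mathlib

section
/- Let G be a finite simple graph, let d ≥ 1 and t ≥ 1 be integers, and let H(G,d,t) be the associated constructed hypergraph. Then the maximum cardinality mmhs of a minimal hitting set of H(G,d,t) satisfies t·C(α(G),d) ≤ mmhs ≤ t·C(α(G),d) + |V(G)|, where α(G) is the maximum size of an independent set of G and C(α(G),d) denotes the binomial coefficient. -/
/-- `F` is a hitting set of the hypergraph with hyperedge family `E'`:
it intersects every hyperedge. -/
def HittingSet {W : Type*} (E' : Set (Set W)) (F : Set W) : Prop :=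
  ∀ e ∈ E', (F ∩ e).Nonempty

/-- `F` is a minimal hitting set: it is a hitting set and no proper subset of it is. -/
def MinimalHittingSet {W : Type*} (E' : Set (Set W)) (F : Set W) : Prop :=
  HittingSet E' F ∧ ∀ F' : Set W, F' ⊂ F → ¬ HittingSet E' F'

/-- `I` is an independent set of `G` (as a `Finset`): no two of its vertices are adjacent. -/
def FinIndep {V : Type*} (G : SimpleGraph V) (I : Finset V) : Prop :=
  ∀ u ∈ I, ∀ v ∈ I, ¬ G.Adj u v

/-- The vertex set of the hypergraph `H(G,d,t)`: the vertices of `G` together with the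
pairs `(S, a)` where `S ⊆ V(G)` has `|S| = d` and `1 ≤ a ≤ t`. -/
abbrev HVert (V : Type*) (d t : ℕ) : Type _ :=
  V ⊕ ({S : Finset V // S.card = d} × Fin t)

/-- The hyperedges of `H(G,d,t)`: the set `{u, v}` for every edge `uv` of `G`, and the
set `S ∪ {(S, a)}` for every `d`-element subset `S` of `V(G)` and every `1 ≤ a ≤ t`. -/
def hEdges {V : Type*} (G : SimpleGraph V) (d t : ℕ) : Set (Set (HVert V d t)) :=
  {e | (∃ u v : V, G.Adj u v ∧ e = {Sum.inl u, Sum.inl v}) ∨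
       (∃ (S : {S : Finset V // S.card = d}) (a : Fin t),
          e = Sum.inl '' (↑S.1 : Set V) ∪ {Sum.inr (S, a)})}
/-!
A maximum independent set `I` of `G` yields the minimal hitting set consisting of the vertices
outside `I` together with all `t · C(|I|, d)` pendant vertices `(S, a)` with `S ⊆ I`; this gives
the lower bound. Conversely, in any hitting set `F` the vertices of `G` missed by `F` form an
independent set `C`, and minimality forces every pendant vertex `(S, a) ∈ F` to have `S ⊆ C`
(its only hyperedge must be privately hit), so `|F| ≤ |V(G)| + t · C(|C|, d)`.
-/

open Finset

section HittingSet

variable {W : Type*} {E' : Set (Set W)} {F : Set W}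

theorem minimalHittingSet_iff :
    MinimalHittingSet E' F ↔ HittingSet E' F ∧ ∀ x ∈ F, ∃ e ∈ E', x ∈ e ∧ F ∩ e ⊆ {x} := by
  refine ⟨fun ⟨hF, hmin⟩ => ⟨hF, fun x hx => ?_⟩, fun ⟨hF, hpriv⟩ => ⟨hF, fun F' hF' hhit => ?_⟩⟩
  · obtain ⟨e, he, hmiss⟩ : ∃ e ∈ E', ¬ ((F \ {x}) ∩ e).Nonempty := by
      simpa [HittingSet] using hmin (F \ {x}) (Set.sdiff_singleton_ssubset.mpr hx)
    have hpriv : F ∩ e ⊆ {x} := fun y hy => by_contra fun hyx => hmiss ⟨y, ⟨hy.1, hyx⟩, hy.2⟩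
    obtain ⟨y, hy⟩ := hF e he
    exact ⟨e, he, hpriv hy ▸ hy.2, hpriv⟩
  · obtain ⟨x, hxF, hxF'⟩ := Set.exists_of_ssubset hF'
    obtain ⟨e, he, -, hpriv⟩ := hpriv x hxF
    obtain ⟨y, hyF', hye⟩ := hhit e he
    exact hxF' (hpriv ⟨hF'.subset hyF', hye⟩ ▸ hyF')

end HittingSet

section Construction

variable {V : Type*} {G : SimpleGraph V} {d t : ℕ}

theorem adj_mem_hEdges {u v : V} (h : G.Adj u v) :
    {Sum.inl u, Sum.inl v} ∈ hEdges G d t :=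
  Or.inl ⟨u, v, h, rfl⟩

theorem pendant_mem_hEdges (S : {S : Finset V // S.card = d}) (a : Fin t) :
    Sum.inl '' (↑S.1 : Set V) ∪ {Sum.inr (S, a)} ∈ hEdges G d t :=
  Or.inr ⟨S, a, rfl⟩

theorem FinIndep.exists_adj_of_notMem [DecidableEq V] {I : Finset V} (hI : FinIndep G I)
    (hmax : ∀ J, FinIndep G J → J.card ≤ I.card) {v : V} (hv : v ∉ I) : ∃ w ∈ I, G.Adj v w := by
  by_contra! h
  have hind : FinIndep G (insert v I) := by
    simp only [FinIndep, mem_insert, forall_eq_or_imp]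
    exact ⟨⟨G.irrefl, h⟩, fun u hu => ⟨fun huv => h u hu huv.symm, hI u hu⟩⟩
  have := hmax _ hind
  rw [card_insert_of_notMem hv] at this
  omega

variable [Fintype V]

noncomputable def missedVertices (F : Set (HVert V d t)) : Finset V :=
  open Classical in univ.filter fun v => Sum.inl v ∉ F

theorem HittingSet.finIndep_missedVertices {F : Set (HVert V d t)}
    (hF : HittingSet (hEdges G d t) F) : FinIndep G (missedVertices F) := by
  intro u hu v hv huv
  simp only [missedVertices, mem_filter, mem_univ, true_and] at hu hv
  obtain ⟨y, hyF, rfl | rfl⟩ := hF _ (adj_mem_hEdges huv)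
  exacts [hu hyF, hv hyF]

variable [DecidableEq V]

variable (d t) in
def pendantsWithin (I : Finset V) : Finset ({S : Finset V // S.card = d} × Fin t) :=
  univ.filter fun p => p.1.1 ⊆ I

theorem card_pendantsWithin (I : Finset V) :
    (pendantsWithin d t I).card = t * I.card.choose d := by
  have : (pendantsWithin d t I).card = (I.powersetCard d ×ˢ (univ : Finset (Fin t))).card := by
    refine card_bij' (fun p _ => (p.1.1, p.2))
      (fun q hq => (⟨q.1, (mem_powersetCard.mp (mem_product.mp hq).1).2⟩, q.2))
      (fun p hp => ?_) (fun q hq => ?_) (fun _ _ => rfl) (fun _ _ => rfl)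
    · simp_all [pendantsWithin, p.1.2]
    · simp only [mem_product, mem_powersetCard] at hq
      simp [pendantsWithin, hq.1.1]
  rw [this, card_product, card_powersetCard, card_univ, Fintype.card_fin, mul_comm]

variable (d t) in
def hittingSetOfIndep (I : Finset V) : Finset (HVert V d t) :=
  Iᶜ.disjSum (pendantsWithin d t I)

theorem card_hittingSetOfIndep (I : Finset V) :
    (hittingSetOfIndep d t I).card = Iᶜ.card + t * I.card.choose d := by
  rw [hittingSetOfIndep, card_disjSum, card_pendantsWithin]

theorem minimalHittingSet_hittingSetOfIndep {I : Finset V} (hI : FinIndep G I)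
    (hmax : ∀ J, FinIndep G J → J.card ≤ I.card) :
    MinimalHittingSet (hEdges G d t) ↑(hittingSetOfIndep d t I) := by
  refine minimalHittingSet_iff.mpr ⟨?_, ?_⟩
  · rintro e (⟨u, v, huv, rfl⟩ | ⟨S, a, rfl⟩)
    · by_cases hu : u ∈ I
      · have hv : v ∉ I := fun hv => hI u hu v hv huv
        exact ⟨Sum.inl v, by simp [hittingSetOfIndep, hv]⟩
      · exact ⟨Sum.inl u, by simp [hittingSetOfIndep, hu]⟩
    · by_cases hS : S.1 ⊆ I
      · exact ⟨Sum.inr (S, a), by simp [hittingSetOfIndep, pendantsWithin, hS]⟩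
      · obtain ⟨u, hu, hu'⟩ := not_subset.mp hS
        exact ⟨Sum.inl u, by simp [hittingSetOfIndep, hu, hu']⟩
  · rintro (v | ⟨S, a⟩) hx
    · have hv : v ∉ I := by simpa [hittingSetOfIndep] using hx
      obtain ⟨w, hw, hvw⟩ := hI.exists_adj_of_notMem hmax hv
      refine ⟨_, adj_mem_hEdges hvw, by simp, ?_⟩
      rintro _ ⟨hy, rfl | rfl⟩
      · rfl
      · simp [hittingSetOfIndep, hw] at hy
    · have hS : S.1 ⊆ I := by simpa [hittingSetOfIndep, pendantsWithin] using hx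
      refine ⟨_, pendant_mem_hEdges S a, by simp, ?_⟩
      rintro _ ⟨hy, ⟨u, hu, rfl⟩ | rfl⟩
      · simp [hittingSetOfIndep, hS hu] at hy
      · rfl

theorem MinimalHittingSet.subset_pendantsWithin {F : Set (HVert V d t)}
    (hF : MinimalHittingSet (hEdges G d t) F) :
    F ⊆ ↑(univ.disjSum (pendantsWithin d t (missedVertices F)) : Finset (HVert V d t)) := by
  rintro (v | ⟨S, a⟩) hx
  · simp
  · obtain ⟨e, he, hxe, hpriv⟩ := (minimalHittingSet_iff.mp hF).2 _ hx
    -- graph edges contain no pendant vertex, so the private hyperedge is `S ∪ {(S, a)}`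
    obtain ⟨u, v, -, rfl⟩ | ⟨S', a', rfl⟩ := he
    · simp at hxe
    · obtain ⟨rfl, rfl⟩ : S' = S ∧ a' = a := by simpa [eq_comm] using hxe
      simp only [mem_coe, inr_mem_disjSum, pendantsWithin, mem_filter, mem_univ, true_and]
      intro u hu
      simp only [missedVertices, mem_filter, mem_univ, true_and]
      exact fun huF => by simpa using hpriv ⟨huF, Or.inl ⟨u, hu, rfl⟩⟩

end Construction

theorem stmt15_general {V : Type*} [Fintype V] (G : SimpleGraph V)
    (d t : ℕ)
    (α : ℕ) (hα₁ : ∃ I : Finset V, FinIndep G I ∧ I.card = α)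
    (hα₂ : ∀ I : Finset V, FinIndep G I → I.card ≤ α)
    (mmhs : ℕ)
    (hm₁ : ∃ F : Set (HVert V d t), MinimalHittingSet (hEdges G d t) F ∧ F.ncard = mmhs)
    (hm₂ : ∀ F : Set (HVert V d t), MinimalHittingSet (hEdges G d t) F → F.ncard ≤ mmhs) :
    t * α.choose d ≤ mmhs ∧ mmhs ≤ t * α.choose d + Fintype.card V := by
  classical
  constructor
  · obtain ⟨I, hI, rfl⟩ := hα₁
    have := hm₂ _ (minimalHittingSet_hittingSetOfIndep (t := t) hI hα₂)
    rw [Set.ncard_coe_finset, card_hittingSetOfIndep] at this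
    omega
  · obtain ⟨F, hF, rfl⟩ := hm₁
    have hC := hα₂ _ hF.1.finIndep_missedVertices
    calc F.ncard ≤ (univ.disjSum (pendantsWithin d t (missedVertices F))).card := by
          simpa using Set.ncard_le_ncard hF.subset_pendantsWithin
      _ ≤ t * α.choose d + Fintype.card V := by
          rw [card_disjSum, card_univ, card_pendantsWithin]
          have := Nat.mul_le_mul_left t (Nat.choose_le_choose d hC)
          omega

theorem stmt15 {V : Type*} [Fintype V] [DecidableEq V] (G : SimpleGraph V)
    (d t : ℕ) (hd : 1 ≤ d) (ht : 1 ≤ t)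
    (α : ℕ) (hα₁ : ∃ I : Finset V, FinIndep G I ∧ I.card = α)
    (hα₂ : ∀ I : Finset V, FinIndep G I → I.card ≤ α)
    (mmhs : ℕ)
    (hm₁ : ∃ F : Set (HVert V d t), MinimalHittingSet (hEdges G d t) F ∧ F.ncard = mmhs)
    (hm₂ : ∀ F : Set (HVert V d t), MinimalHittingSet (hEdges G d t) F → F.ncard ≤ mmhs) :
    t * α.choose d ≤ mmhs ∧ mmhs ≤ t * α.choose d + Fintype.card V :=
  stmt15_general G d t α hα₁ hα₂ mmhs hm₁ hm₂
end

section
/- Let G be a finite simple graph whose vertex set is partitioned into k cliques V_1,…,V_k, let A ≥ 3, and let G'_A be the associated constructed graph. If D is a minimal dominating set of G'_A with |D| ≥ A·k, then for every u ∈ V(G) with Z_u ∩ D ≠ ∅ and every index i with u ∈ V_i such that some u' ∈ V_i with u' ≠ u also satisfies Z_{u'} ∩ D ≠ ∅, it holds that |Z_u ∩ D| = 1. -/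
/-- `D` is a dominating set of `G`: every vertex belongs to `D` or has a neighbor in `D`. -/
def Dominates {V : Type*} (G : SimpleGraph V) (D : Set V) : Prop :=
  ∀ v : V, v ∈ D ∨ ∃ u ∈ D, G.Adj u v

/-- `D` is a minimal dominating set of `G`: dominating, and no proper subset dominates. -/
def MinimalDominatingSet {V : Type*} (G : SimpleGraph V) (D : Set V) : Prop :=
  Dominates G D ∧ ∀ D' : Set V, D' ⊂ D → ¬ Dominates G D'

/-- `I` is an independent set of `G`: no two of its vertices are adjacent. -/
def IndepSet {V : Type*} (G : SimpleGraph V) (I : Set V) : Prop :=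
  ∀ u ∈ I, ∀ v ∈ I, ¬ G.Adj u v

/-- The constructed graph `G'_A`.  Vertices are the pairs `(u, a)` with `u ∈ V(G)`,
`1 ≤ a ≤ A` (the copy `(u, a)` lies in the independent set `Z_u`), together with the
vertices `z_1, …, z_k`.  Two vertices `(u, a)`, `(v, b)` are adjacent iff `uv ∈ E(G)`
(in particular `u ≠ v`); `z_i` is adjacent exactly to the vertices `(u, a)` with
`u ∈ V_i` (i.e. `c u = i`); the `z_i` are pairwise non-adjacent.  The partition of
`V(G)` into the `k` cliques `V_1, …, V_k` is encoded by the map `c : V → Fin k`. -/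
def primeGraph {V : Type*} {k : ℕ} (G : SimpleGraph V) (c : V → Fin k) (A : ℕ) :
    SimpleGraph ((V × Fin A) ⊕ Fin k) :=
  SimpleGraph.fromRel fun x y =>
    match x, y with
    | Sum.inl (u, _), Sum.inl (v, _) => G.Adj u v
    | Sum.inl (u, _), Sum.inr i => c u = i
    | _, _ => False

/-!
All copies `(u, a)` of a vertex `u` have the same neighbourhood in `G'_A`. If a minimal
dominating set `D` contained two of them, it could drop one: whatever that copy dominates, the
other copy dominates too, and the copy itself is dominated by a copy of `u'` in `D`, which is
adjacent to it because `u` and `u'` lie in a common clique.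
-/

namespace MinimalDominatingSet

variable {V : Type*} {G : SimpleGraph V} {D : Set V}

theorem dominates_diff_singleton (hD : Dominates G D) {x y w : V} (hx : x ∈ D) (hxy : x ≠ y)
    (hN : G.neighborSet y ⊆ G.neighborSet x) (hw : w ∈ D) (hwy : G.Adj w y) :
    Dominates G (D \ {y}) := by
  intro v
  by_cases hvy : v = y
  · subst hvy
    exact Or.inr ⟨w, ⟨hw, hwy.ne⟩, hwy⟩
  rcases hD v with hv | ⟨t, htD, htv⟩
  · exact Or.inl ⟨hv, hvy⟩
  by_cases hty : t = y
  · subst hty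
    exact Or.inr ⟨x, ⟨hx, hxy⟩, hN htv⟩
  · exact Or.inr ⟨t, ⟨htD, hty⟩, htv⟩

theorem eq_of_neighborSet_subset (hD : MinimalDominatingSet G D) {x y w : V} (hx : x ∈ D)
    (hy : y ∈ D) (hN : G.neighborSet y ⊆ G.neighborSet x) (hw : w ∈ D) (hwy : G.Adj w y) :
    x = y := by
  by_contra hxy
  exact hD.2 _ (Set.sdiff_singleton_ssubset.mpr hy)
    (dominates_diff_singleton hD.1 hx hxy hN hw hwy)

end MinimalDominatingSet

section primeGraph

variable {V : Type*} {k : ℕ} {G : SimpleGraph V} {c : V → Fin k} {A : ℕ}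

theorem primeGraph_adj_inl_inl {u v : V} {a b : Fin A} :
    (primeGraph G c A).Adj (.inl (u, a)) (.inl (v, b)) ↔ G.Adj u v := by
  simp only [primeGraph, SimpleGraph.fromRel_adj, ne_eq, Sum.inl.injEq, Prod.mk.injEq]
  exact ⟨fun h => h.2.elim id G.adj_symm, fun h => ⟨fun he => h.ne he.1, Or.inl h⟩⟩

theorem primeGraph_adj_inl_inr {u : V} {a : Fin A} {i : Fin k} :
    (primeGraph G c A).Adj (.inl (u, a)) (.inr i) ↔ c u = i := by
  simp [primeGraph, SimpleGraph.fromRel_adj]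

theorem primeGraph_neighborSet_inl (u : V) (a b : Fin A) :
    (primeGraph G c A).neighborSet (.inl (u, a)) =
      (primeGraph G c A).neighborSet (.inl (u, b)) := by
  ext (⟨v, _⟩ | i) <;>
    simp only [SimpleGraph.mem_neighborSet, primeGraph_adj_inl_inl, primeGraph_adj_inl_inr]

end primeGraph

theorem stmt16_general {V : Type*} (G : SimpleGraph V) (k A : ℕ) (c : V → Fin k)
    (hclique : ∀ u v : V, u ≠ v → c u = c v → G.Adj u v)
    (D : Set ((V × Fin A) ⊕ Fin k))
    (hD : MinimalDominatingSet (primeGraph G c A) D)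
    (u : V) (hu : {x ∈ D | ∃ a : Fin A, x = Sum.inl (u, a)}.Nonempty)
    (u' : V) (hne : u' ≠ u) (hsame : c u' = c u)
    (hu' : {x ∈ D | ∃ a : Fin A, x = Sum.inl (u', a)}.Nonempty) :
    {x ∈ D | ∃ a : Fin A, x = Sum.inl (u, a)}.ncard = 1 := by
  obtain ⟨_, hx₀, a₀, rfl⟩ := hu
  obtain ⟨_, hw, _, rfl⟩ := hu'
  rw [Set.ncard_eq_one]
  refine ⟨_, Set.eq_singleton_iff_unique_mem.mpr ⟨⟨hx₀, a₀, rfl⟩, ?_⟩⟩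
  rintro _ ⟨hy, a, rfl⟩
  exact (hD.eq_of_neighborSet_subset hx₀ hy (primeGraph_neighborSet_inl u a a₀).le hw
    (primeGraph_adj_inl_inl.mpr (hclique u' u hne hsame))).symm

theorem stmt16 {V : Type*} [Fintype V] (G : SimpleGraph V) (k A : ℕ) (c : V → Fin k)
    (hclique : ∀ u v : V, u ≠ v → c u = c v → G.Adj u v)
    (hsurj : Function.Surjective c) (hA : 3 ≤ A)
    (D : Set ((V × Fin A) ⊕ Fin k))
    (hD : MinimalDominatingSet (primeGraph G c A) D) (hcard : A * k ≤ D.ncard)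
    (u : V) (hu : {x ∈ D | ∃ a : Fin A, x = Sum.inl (u, a)}.Nonempty)
    (u' : V) (hne : u' ≠ u) (hsame : c u' = c u)
    (hu' : {x ∈ D | ∃ a : Fin A, x = Sum.inl (u', a)}.Nonempty) :
    {x ∈ D | ∃ a : Fin A, x = Sum.inl (u, a)}.ncard = 1 :=
  stmt16_general G k A c hclique D hD u hu u' hne hsame hu'
end
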